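/- Let A be a weakly-connected combination matrix, M ≥ 1, and w₁⋆, …, w_S⋆ ∈ ℝ^M arbitrary vectors. Define 𝒲⋆ ∈ ℝ^{N_gS·M} as the stacked vector with blocks 1_{N_s} ⊗ w_s⋆ for s = 1,…,S, define 𝒲• := (W ⊗ I_M)ᵀ 𝒲⋆ ∈ ℝ^{N_gR·M}, and let 𝒲_∞ := [𝒲⋆; 𝒲•] ∈ ℝ^{N·M}. Then 𝒲_∞ is a fixed point of (A ⊗ I_M)ᵀ, i.e. (A ⊗ I_M)ᵀ 𝒲_∞ = 𝒲_∞. -/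

import Mathlib

/-!
On the `S`-agents, `𝒲_∞` is constant on each block and `T_SS` is block diagonal, so left
stochasticity of `A` reproduces it. On the `R`-agents, the fixed-point equation reads
`𝒲⋆ᵀ T_SR + 𝒲•ᵀ T_RR = 𝒲•ᵀ`, which follows from `T_SR + W T_RR = W`, i.e. from
`W (I - T_RR) = T_SR`, as soon as `I - T_RR` is invertible. It is, because `T_RR` fixes no
nonzero `v`: `|v|` is then subinvariant, and going down from the last block, an irreducible
diagonal block with column sums at most one, one of them strictly, has no nonzero nonnegative
subinvariant vector (summing `u ≤ B u` forces equality, so `u` vanishes at the deficient column,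
hence everywhere by irreducibility).
-/

open Matrix Filter

noncomputable section

/-- The set of agents of a network made of `S + R` sub-networks of sizes `Nsz b`:
an agent is a pair of a sub-network index and an index within that sub-network. -/
abbrev Agent (S R : ℕ) (Nsz : Fin (S + R) → ℕ) := (b : Fin (S + R)) × Fin (Nsz b)

/-- The `b`-th diagonal block of a combination matrix. -/
def diagBlock {S R : ℕ} {Nsz : Fin (S + R) → ℕ}
    (A : Matrix (Agent S R Nsz) (Agent S R Nsz) ℝ) (b : Fin (S + R)) :
    Matrix (Fin (Nsz b)) (Fin (Nsz b)) ℝ :=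
  Matrix.of fun i j => A ⟨b, i⟩ ⟨b, j⟩

/-- Agents belonging to the sending group `S` (the first `S` sub-networks). -/
abbrev SIdx (S R : ℕ) (Nsz : Fin (S + R) → ℕ) := {x : Agent S R Nsz // x.1.val < S}

/-- Agents belonging to the receiving group `R` (the last `R` sub-networks). -/
abbrev RIdx (S R : ℕ) (Nsz : Fin (S + R) → ℕ) := {x : Agent S R Nsz // S ≤ x.1.val}

/-- The block `T_SR` of a combination matrix (weights from `S`-agents to `R`-agents). -/
def TSR {S R : ℕ} {Nsz : Fin (S + R) → ℕ}
    (A : Matrix (Agent S R Nsz) (Agent S R Nsz) ℝ) :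
    Matrix (SIdx S R Nsz) (RIdx S R Nsz) ℝ :=
  Matrix.of fun x y => A x.1 y.1

/-- The block `T_RR` of a combination matrix (weights internal to the `R`-group). -/
def TRR {S R : ℕ} {Nsz : Fin (S + R) → ℕ}
    (A : Matrix (Agent S R Nsz) (Agent S R Nsz) ℝ) :
    Matrix (RIdx S R Nsz) (RIdx S R Nsz) ℝ :=
  Matrix.of fun x y => A x.1 y.1

/-- The matrix `W = T_SR (I - T_RR)⁻¹`. -/
def Wmat {S R : ℕ} {Nsz : Fin (S + R) → ℕ}
    (A : Matrix (Agent S R Nsz) (Agent S R Nsz) ℝ) :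
    Matrix (SIdx S R Nsz) (RIdx S R Nsz) ℝ :=
  TSR A * (1 - TRR A)⁻¹

/-- A "weakly-connected combination matrix": a left-stochastic nonnegative matrix, block
upper-triangular, whose first `S` diagonal blocks are primitive (some power is entrywise
positive) and whose last `R` diagonal blocks are irreducible with all column sums at most
one and at least one column sum strictly less than one (the column-sum conditions on the
`R`-blocks follow from left-stochasticity except for the strict one, which is stated). -/
structure IsWeaklyConnected {S R : ℕ} {Nsz : Fin (S + R) → ℕ}
    (A : Matrix (Agent S R Nsz) (Agent S R Nsz) ℝ) : Prop where
  S_pos : 1 ≤ S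
  R_pos : 1 ≤ R
  Nsz_pos : ∀ b, 1 ≤ Nsz b
  nonneg : ∀ x y, 0 ≤ A x y
  colsum : ∀ y, ∑ x, A x y = 1
  SS_blockdiag : ∀ x y : Agent S R Nsz, y.1.val < S → x.1 ≠ y.1 → A x y = 0
  blockUpper : ∀ x y : Agent S R Nsz, y.1.val < x.1.val → A x y = 0
  primitive : ∀ b : Fin (S + R), b.val < S →
    ∃ m : ℕ, 1 ≤ m ∧ ∀ i j, 0 < ((diagBlock A b) ^ m) i j
  irreducible : ∀ b : Fin (S + R), S ≤ b.val →
    ∀ i j, ∃ m : ℕ, 1 ≤ m ∧ 0 < ((diagBlock A b) ^ m) i j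
  colsum_lt : ∀ b : Fin (S + R), S ≤ b.val → ∃ j, ∑ i, diagBlock A b i j < 1

/-- `p` is the family of Perron eigenvectors of the first `S` diagonal blocks. -/
def IsPerronFamily {S R : ℕ} {Nsz : Fin (S + R) → ℕ}
    (A : Matrix (Agent S R Nsz) (Agent S R Nsz) ℝ)
    (p : (b : Fin (S + R)) → Fin (Nsz b) → ℝ) : Prop :=
  ∀ b : Fin (S + R), b.val < S →
    (∀ i, 0 < p b i) ∧ (∑ i, p b i = 1) ∧ (diagBlock A b).mulVec (p b) = p b

end

open scoped Kronecker

namespace Matrix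

section Substochastic

variable {ι : Type*} [Fintype ι] {B : Matrix ι ι ℝ} {u : ι → ℝ}

lemma sum_mulVec_sub_add_colDefect_mul (B : Matrix ι ι ℝ) (u : ι → ℝ) :
    ∑ j, ((B *ᵥ u) j - u j + (1 - ∑ i, B i j) * u j) = 0 := by
  simp only [Finset.sum_add_distrib, Finset.sum_sub_distrib, sub_mul, one_mul, Finset.sum_mul,
    mulVec, dotProduct]
  rw [Finset.sum_comm]
  ring

lemma mulVec_sub_add_colDefect_mul_eq_zero (hcol : ∀ j, ∑ i, B i j ≤ 1) (hu : 0 ≤ u)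
    (hle : u ≤ B *ᵥ u) (j : ι) : (B *ᵥ u) j - u j + (1 - ∑ i, B i j) * u j = 0 := by
  refine (Finset.sum_eq_zero_iff_of_nonneg fun k _ => ?_).1
    (sum_mulVec_sub_add_colDefect_mul B u) j (Finset.mem_univ j)
  exact add_nonneg (sub_nonneg.2 (hle k)) (mul_nonneg (sub_nonneg.2 (hcol k)) (hu k))

lemma mulVec_eq_of_le_mulVec (hcol : ∀ j, ∑ i, B i j ≤ 1) (hu : 0 ≤ u) (hle : u ≤ B *ᵥ u) :
    B *ᵥ u = u := by
  funext j
  have h := mulVec_sub_add_colDefect_mul_eq_zero hcol hu hle j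
  linarith [hle j, mul_nonneg (sub_nonneg.2 (hcol j)) (hu j)]

lemma apply_eq_zero_of_le_mulVec (hcol : ∀ j, ∑ i, B i j ≤ 1) (hu : 0 ≤ u)
    (hle : u ≤ B *ᵥ u) {j : ι} (hj : ∑ i, B i j < 1) : u j = 0 := by
  have h := mulVec_sub_add_colDefect_mul_eq_zero hcol hu hle j
  have hdefect : (1 - ∑ i, B i j) * u j = 0 := by
    linarith [hle j, mul_nonneg (sub_nonneg.2 (hcol j)) (hu j)]
  exact (mul_eq_zero.1 hdefect).resolve_left (by linarith)

lemma apply_eq_zero_of_mulVec_eq [DecidableEq ι] (hB : ∀ i j, 0 ≤ B i j) (hu : 0 ≤ u)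
    (hfix : B *ᵥ u = u) {i j : ι} (hi : u i = 0) {m : ℕ} (hpos : 0 < (B ^ m) i j) :
    u j = 0 := by
  have hpow : ∀ n : ℕ, (B ^ n) *ᵥ u = u := fun n => by
    induction n with
    | zero => simp
    | succ n ih => rw [pow_succ, ← mulVec_mulVec, hfix, ih]
  have : (B ^ m) i j * u j ≤ u i := by
    calc (B ^ m) i j * u j ≤ ∑ k, (B ^ m) i k * u k :=
          Finset.single_le_sum (fun k _ => mul_nonneg (pow_apply_nonneg hB m i k) (hu k))
            (Finset.mem_univ j)
      _ = u i := congrFun (hpow m) i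
  exact le_antisymm (nonpos_of_mul_nonpos_right (hi ▸ this) hpos) (hu j)

lemma IsIrreducible.eq_zero_of_le_mulVec [DecidableEq ι] (hB : B.IsIrreducible)
    (hcol : ∀ j, ∑ i, B i j ≤ 1) (hdef : ∃ j, ∑ i, B i j < 1) (hu : 0 ≤ u)
    (hle : u ≤ B *ᵥ u) : u = 0 := by
  obtain ⟨i, hi⟩ := hdef
  funext j
  obtain ⟨m, -, hpos⟩ := (isIrreducible_iff_exists_pow_pos hB.nonneg).1 hB i j
  exact apply_eq_zero_of_mulVec_eq hB.nonneg hu (mulVec_eq_of_le_mulVec hcol hu hle)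
    (apply_eq_zero_of_le_mulVec hcol hu hle hi) hpos

lemma abs_mulVec_le_mulVec_abs (hB : ∀ i j, 0 ≤ B i j) (v : ι → ℝ) :
    |B *ᵥ v| ≤ B *ᵥ |v| := fun i =>
  calc |(B *ᵥ v) i| ≤ ∑ j, |B i j * v j| := Finset.abs_sum_le_sum_abs _ _
    _ = (B *ᵥ |v|) i := by simp only [abs_mul, abs_of_nonneg (hB i _)]; rfl

end Substochastic

lemma transpose_kronecker_one_mulVec_apply {α β κ R : Type*} [Fintype α] [Fintype κ]
    [DecidableEq κ] [CommSemiring R] (B : Matrix α β R) (v : α × κ → R) (y : β) (k : κ) :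
    ((B ⊗ₖ (1 : Matrix κ κ R))ᵀ *ᵥ v) (y, k) = ((fun x => v (x, k)) ᵥ* B) y := by
  simp [mulVec, vecMul, dotProduct, Fintype.sum_prod_type, one_apply, mul_comm]

end Matrix

section WeaklyConnected

variable {S R : ℕ} {Nsz : Fin (S + R) → ℕ} {A : Matrix (Agent S R Nsz) (Agent S R Nsz) ℝ}

lemma IsWeaklyConnected.sum_diagBlock_le_one (hA : IsWeaklyConnected A) (b : Fin (S + R))
    (j : Fin (Nsz b)) : ∑ i, diagBlock A b i j ≤ 1 :=
  calc ∑ i, diagBlock A b i j ≤ ∑ b', ∑ i : Fin (Nsz b'), A ⟨b', i⟩ ⟨b, j⟩ :=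
        Finset.single_le_sum (f := fun b' => ∑ i : Fin (Nsz b'), A ⟨b', i⟩ ⟨b, j⟩)
          (fun b' _ => Finset.sum_nonneg fun i _ => hA.nonneg _ _) (Finset.mem_univ b)
    _ = 1 := by rw [← Fintype.sum_sigma (fun x => A x ⟨b, j⟩), hA.colsum]

lemma IsWeaklyConnected.isIrreducible_diagBlock (hA : IsWeaklyConnected A) {b : Fin (S + R)}
    (hb : S ≤ b.val) : (diagBlock A b).IsIrreducible :=
  (isIrreducible_iff_exists_pow_pos fun _ _ => hA.nonneg _ _).2 (hA.irreducible b hb)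

lemma IsWeaklyConnected.TRR_mulVec_apply (hA : IsWeaklyConnected A) {u : RIdx S R Nsz → ℝ}
    {b : Fin (S + R)} (hb : S ≤ b.val) (hu : ∀ y : RIdx S R Nsz, b < y.1.1 → u y = 0)
    (i : Fin (Nsz b)) :
    (TRR A *ᵥ u) ⟨⟨b, i⟩, hb⟩ = (diagBlock A b *ᵥ fun j => u ⟨⟨b, j⟩, hb⟩) i := by
  refine (Fintype.sum_of_injective (fun j => (⟨⟨b, j⟩, hb⟩ : RIdx S R Nsz))
    (fun j j' h => by simpa using h) _ _ ?_ fun j => rfl).symm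
  rintro ⟨⟨b', j⟩, hb'⟩ hy
  rcases lt_trichotomy b' b with hlt | rfl | hgt
  · exact mul_eq_zero_of_left (hA.blockUpper ⟨b, i⟩ ⟨b', j⟩ hlt) _
  · exact absurd ⟨j, rfl⟩ hy
  · exact mul_eq_zero_of_right _ (hu _ hgt)

lemma IsWeaklyConnected.eq_zero_of_le_TRR_mulVec (hA : IsWeaklyConnected A)
    {u : RIdx S R Nsz → ℝ} (hu : 0 ≤ u) (hle : u ≤ TRR A *ᵥ u) : u = 0 := by
  suffices ∀ (b : Fin (S + R)) (i : Fin (Nsz b)) (hb : S ≤ b.val), u ⟨⟨b, i⟩, hb⟩ = 0 from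
    funext fun x => this x.1.1 x.1.2 x.2
  intro b
  induction b using WellFoundedGT.induction with
  | _ b ih =>
    intro i hb
    have hlater : ∀ y : RIdx S R Nsz, b < y.1.1 → u y = 0 := fun y hy => ih _ hy y.1.2 y.2
    have hblock : (fun j => u ⟨⟨b, j⟩, hb⟩) = 0 :=
      (hA.isIrreducible_diagBlock hb).eq_zero_of_le_mulVec (hA.sum_diagBlock_le_one b)
        (hA.colsum_lt b hb) (fun j => hu _)
        (fun j => (hle _).trans_eq (hA.TRR_mulVec_apply hb hlater j))
    exact congrFun hblock i

lemma IsWeaklyConnected.isUnit_det_one_sub_TRR (hA : IsWeaklyConnected A) :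
    IsUnit (1 - TRR A).det := by
  classical
  refine isUnit_iff_ne_zero.2 fun hdet => ?_
  obtain ⟨v, hv0, hv⟩ := exists_mulVec_eq_zero_iff.2 hdet
  have hfix : TRR A *ᵥ v = v := by
    rw [sub_mulVec, one_mulVec, sub_eq_zero] at hv
    exact hv.symm
  have hle : |v| ≤ TRR A *ᵥ |v| :=
    calc |v| = |TRR A *ᵥ v| := by rw [hfix]
      _ ≤ TRR A *ᵥ |v| := abs_mulVec_le_mulVec_abs (fun _ _ => hA.nonneg _ _) v
  have habs := hA.eq_zero_of_le_TRR_mulVec (fun x => abs_nonneg (v x)) hle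
  exact hv0 (funext fun x => abs_eq_zero.1 (congrFun habs x))

lemma IsWeaklyConnected.TSR_add_Wmat_mul_TRR (hA : IsWeaklyConnected A) :
    TSR A + Wmat A * TRR A = Wmat A := by
  have h : Wmat A * (1 - TRR A) = TSR A := by
    rw [Wmat, Matrix.mul_assoc, nonsing_inv_mul _ hA.isUnit_det_one_sub_TRR, Matrix.mul_one]
  rw [← h, Matrix.mul_sub, Matrix.mul_one, sub_add_cancel]

end WeaklyConnected

section LimitVector

variable {S R : ℕ} {Nsz : Fin (S + R) → ℕ} {A : Matrix (Agent S R Nsz) (Agent S R Nsz) ℝ}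

lemma IsWeaklyConnected.vecMul_apply_SIdx (hA : IsWeaklyConnected A) {z : Agent S R Nsz → ℝ}
    {c : Fin (S + R) → ℝ} (hz : ∀ s : SIdx S R Nsz, z s.1 = c s.1.1) (s : SIdx S R Nsz) :
    (z ᵥ* A) s.1 = c s.1.1 := by
  have hterm : ∀ y, z y * A y s.1 = c s.1.1 * A y s.1 := fun y => by
    by_cases hy : y.1 = s.1.1
    · rw [hz ⟨y, hy ▸ s.2⟩, hy]
    · rw [hA.SS_blockdiag y s.1 s.2 hy, mul_zero, mul_zero]
  simp only [vecMul, dotProduct, hterm, ← Finset.mul_sum, hA.colsum, mul_one]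

lemma vecMul_apply_RIdx (z : Agent S R Nsz → ℝ) (r : RIdx S R Nsz) :
    (z ᵥ* A) r.1 = ((fun s : SIdx S R Nsz => z s.1) ᵥ* TSR A
      + (fun r : RIdx S R Nsz => z r.1) ᵥ* TRR A) r := by
  classical
  simp only [Pi.add_apply, vecMul, dotProduct]
  rw [← Fintype.sum_subtype_add_sum_subtype (fun y : Agent S R Nsz => y.1.val < S)]
  congr 1
  exact Fintype.sum_equiv (Equiv.subtypeEquivRight fun _ => not_lt) _ _ fun _ => rfl

variable (A) in
/-- The `m`-th coordinate slice of `𝒲_∞` when `c b` is the `m`-th coordinate of `w_b⋆`. -/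
noncomputable def limitVector (c : Fin (S + R) → ℝ) : Agent S R Nsz → ℝ := fun x =>
  if h : x.1.val < S then c x.1
  else ((fun s : SIdx S R Nsz => c s.1.1) ᵥ* Wmat A) ⟨x, not_lt.mp h⟩

lemma IsWeaklyConnected.limitVector_vecMul (hA : IsWeaklyConnected A) (c : Fin (S + R) → ℝ) :
    limitVector A c ᵥ* A = limitVector A c := by
  funext x
  by_cases hx : x.1.val < S
  · rw [hA.vecMul_apply_SIdx (fun s => dif_pos s.2) ⟨x, hx⟩, limitVector, dif_pos hx]
  · set w : SIdx S R Nsz → ℝ := fun s => c s.1.1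
    have hS : (fun s : SIdx S R Nsz => limitVector A c s.1) = w :=
      funext fun s => dif_pos s.2
    have hR : (fun r : RIdx S R Nsz => limitVector A c r.1) = w ᵥ* Wmat A :=
      funext fun r => dif_neg (not_lt.mpr r.2)
    rw [vecMul_apply_RIdx _ ⟨x, not_lt.mp hx⟩, hS, hR, vecMul_vecMul, ← vecMul_add,
      hA.TSR_add_Wmat_mul_TRR, limitVector, dif_neg hx]

end LimitVector

open Kronecker in
theorem limit_vector_fixed_point_general
    (S R : ℕ) (Nsz : Fin (S + R) → ℕ)
    (A : Matrix (Agent S R Nsz) (Agent S R Nsz) ℝ)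
    (hA : IsWeaklyConnected A)
    (M : ℕ)
    (wstar : Fin (S + R) → Fin M → ℝ)
    (Wst : SIdx S R Nsz × Fin M → ℝ)
    (hWst : ∀ q, Wst q = wstar q.1.val.1 q.2)
    (Wbul : RIdx S R Nsz × Fin M → ℝ)
    (hWbul : Wbul = ((Wmat A ⊗ₖ (1 : Matrix (Fin M) (Fin M) ℝ)).transpose).mulVec Wst)
    (Winf : Agent S R Nsz × Fin M → ℝ)
    (hWinf : ∀ q, Winf q =
      if h : q.1.1.val < S then wstar q.1.1 q.2
      else Wbul (⟨q.1, not_lt.mp h⟩, q.2)) :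
    ((A ⊗ₖ (1 : Matrix (Fin M) (Fin M) ℝ)).transpose).mulVec Winf = Winf := by
  have hslice : ∀ m, (fun x => Winf (x, m)) = limitVector A (wstar · m) := fun m => by
    funext x
    rw [hWinf, limitVector]
    split_ifs
    · rfl
    · rw [hWbul, transpose_kronecker_one_mulVec_apply]
      simp only [hWst]
  funext ⟨x, m⟩
  rw [transpose_kronecker_one_mulVec_apply, hslice, hA.limitVector_vecMul, ← hslice]

open Kronecker in
/-- **The network limit vector is a fixed point of `(A ⊗ I_M)ᵀ`.**
Let `A` be a weakly-connected combination matrix, `M ≥ 1`, and `w₁⋆, …, w_S⋆ ∈ ℝ^M`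
arbitrary vectors.  Let `𝒲⋆` be the stacked vector with blocks `1_{N_s} ⊗ w_s⋆`, let
`𝒲• := (W ⊗ I_M)ᵀ 𝒲⋆`, and let `𝒲_∞ := [𝒲⋆; 𝒲•]`.  Then `(A ⊗ I_M)ᵀ 𝒲_∞ = 𝒲_∞`. -/
theorem limit_vector_fixed_point
    (S R : ℕ) (Nsz : Fin (S + R) → ℕ)
    (A : Matrix (Agent S R Nsz) (Agent S R Nsz) ℝ)
    (hA : IsWeaklyConnected A)
    (M : ℕ) (hM : 1 ≤ M)
    (wstar : Fin (S + R) → Fin M → ℝ)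
    (Wst : SIdx S R Nsz × Fin M → ℝ)
    (hWst : ∀ q, Wst q = wstar q.1.val.1 q.2)
    (Wbul : RIdx S R Nsz × Fin M → ℝ)
    (hWbul : Wbul = ((Wmat A ⊗ₖ (1 : Matrix (Fin M) (Fin M) ℝ)).transpose).mulVec Wst)
    (Winf : Agent S R Nsz × Fin M → ℝ)
    (hWinf : ∀ q, Winf q =
      if h : q.1.1.val < S then wstar q.1.1 q.2
      else Wbul (⟨q.1, not_lt.mp h⟩, q.2)) :
    ((A ⊗ₖ (1 : Matrix (Fin M) (Fin M) ℝ)).transpose).mulVec Winf = Winf :=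
  limit_vector_fixed_point_general S R Nsz A hA M wstar Wst hWst Wbul hWbul Winf hWinf
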